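/- Guarded systems are closed under demonic choice: ({in.r};[r]) ⊓ ({in.r'};[r']) = {in.r''};[r''] where r'' = in.r ∧ in.r' ∧ (r ∨ r'), i.e., r'' x y = in.r x ∧ in.r' x ∧ (r x y ∨ r' x y). -/
import Mathlib


variable {A B : Type*}

def assert (p : Set A) : Set A → Set A := fun q => p ∩ q

def demonic {A B : Type*} (r : A → B → Prop) : Set B → Set A :=
  fun q => {σ | ∀ σ', r σ σ' → σ' ∈ q}

def inRel {A B : Type*} (r : A → B → Prop) : Set A := {x | ∃ y, r x y}

def dchoice {A B : Type*} (S T : Set B → Set A) : Set B → Set A := fun q => S q ∩ T q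

theorem guarded_dchoice (r r' : A → B → Prop) :
    dchoice (assert (inRel r) ∘ demonic r) (assert (inRel r') ∘ demonic r') =
    assert (inRel (fun x y => x ∈ inRel r ∧ x ∈ inRel r' ∧ (r x y ∨ r' x y))) ∘
      demonic (fun x y => x ∈ inRel r ∧ x ∈ inRel r' ∧ (r x y ∨ r' x y)) := by
  funext q
  ext x
  simp only [dchoice, assert, demonic, inRel, Function.comp, Set.mem_inter_iff,
    Set.mem_setOf_eq]
  constructor
  · rintro ⟨⟨⟨y, hy⟩, h1⟩, ⟨y', hy'⟩, h2⟩
    refine ⟨⟨y, ⟨y, hy⟩, ⟨y', hy'⟩, Or.inl hy⟩, ?_⟩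
    rintro σ' ⟨-, -, h | h⟩
    · exact h1 σ' h
    · exact h2 σ' h
  · rintro ⟨⟨y, hr, hr', _⟩, h⟩
    exact ⟨⟨hr, fun σ' hσ => h σ' ⟨hr, hr', Or.inl hσ⟩⟩,
           ⟨hr', fun σ' hσ => h σ' ⟨hr, hr', Or.inr hσ⟩⟩⟩
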